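/- Let U ⊆ ℂ² ⊗ ℂ³ be a 2-dimensional complex linear subspace. Then U has exactly one decomposable direction if and only if there exist a basis (h₁, h₂) of ℂ² and vectors x, x′, z ∈ ℂ³ such that U is spanned by h₁ ⊗ x + h₂ ⊗ z and h₂ ⊗ x′, where either (a) x′ = x and the pair (x, z) is linearly independent, or (b) the triple (x, x′, z) is a basis of ℂ³. -/

import Mathlib

open Matrix

/-- A nonzero element of `ℂ² ⊗ ℂ³`, viewed as a 2×3 complex matrix, is decomposable if it
is an outer product `h ⊗ x` with `h ≠ 0` and `x ≠ 0` (equivalently, it has rank 1). -/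
def Decomposable (A : Matrix (Fin 2) (Fin 3) ℂ) : Prop :=
  ∃ (h : Fin 2 → ℂ) (x : Fin 3 → ℂ), h ≠ 0 ∧ x ≠ 0 ∧ A = vecMulVec h x

/-- The decomposable directions of a subspace `U ⊆ ℂ² ⊗ ℂ³`: the 1-dimensional subspaces
of `U` spanned by decomposable elements. -/
def decDirections (U : Submodule ℂ (Matrix (Fin 2) (Fin 3) ℂ)) :
    Set (Submodule ℂ (Matrix (Fin 2) (Fin 3) ℂ)) :=
  {D | ∃ A : Matrix (Fin 2) (Fin 3) ℂ,
    A ∈ U ∧ A ≠ 0 ∧ Decomposable A ∧ D = Submodule.span ℂ {A}}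

/-! Let `h₂ ⊗ x'` span the unique decomposable direction, complete `h₂` to a basis `(h₁, h₂)` and
write `U = span {h₁ ⊗ x + h₂ ⊗ z, h₂ ⊗ x'}`. An outer product `c (h₁ ⊗ x + h₂ ⊗ z) + d (h₂ ⊗ x')`
with `c ≠ 0` exists exactly when `x = 0` or `z ∈ span {x, x'}`, so uniqueness amounts to
`x, x' ≠ 0` and `z ∉ span {x, x'}`. Replacing `x'` by `x` when the two are proportional turns this
into the dichotomy (a)/(b). -/

open Submodule

section LinearAlgebra

variable {K V : Type*} [Field K] [AddCommGroup V] [Module K V]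

theorem linearIndependent_pair_iff_ne_zero_and_notMem_span {x y : V} :
    LinearIndependent K ![x, y] ↔ x ≠ 0 ∧ y ∉ span K {x} := by
  have : ![x, y] = Fin.snoc ![x] y := by ext i; fin_cases i <;> rfl
  rw [this, linearIndependent_finSnoc, linearIndependent_unique_iff]
  simp

theorem linearIndependent_triple_iff {x y z : V} :
    LinearIndependent K ![x, y, z] ↔ LinearIndependent K ![x, y] ∧ z ∉ span K {x, y} := by
  have : ![x, y, z] = Fin.snoc ![x, y] z := by ext i; fin_cases i <;> rfl
  rw [this, linearIndependent_finSnoc, range_cons_cons_empty]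

theorem span_pair_smul_right (a b : V) {c : K} (hc : c ≠ 0) :
    span K {a, c • b} = span K {a, b} := by
  rw [span_insert, span_singleton_smul_eq (IsUnit.mk0 c hc), ← span_insert]

theorem LinearIndependent.span_pair_eq_top {a b : V} (hab : LinearIndependent K ![a, b])
    (hV : Module.finrank K V = 2) : span K {a, b} = ⊤ := by
  rw [← range_cons_cons_empty a b ![], hab.span_eq_top_of_card_eq_finrank (by simp [hV])]

theorem Submodule.exists_eq_span_pair_of_finrank_eq_two {U : Submodule K V}
    (hU : Module.finrank K U = 2) {b : V} (hbU : b ∈ U) (hb : b ≠ 0) :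
    ∃ a ∈ U, a ∉ span K {b} ∧ U = span K {a, b} := by
  have hlt : span K {b} < U := by
    refine lt_of_le_of_ne ((span_singleton_le_iff_mem b U).mpr hbU) fun h => ?_
    have := finrank_span_singleton (K := K) hb
    rw [h, hU] at this
    exact absurd this (by norm_num)
  obtain ⟨a, haU, ha⟩ := SetLike.exists_of_lt hlt
  refine ⟨a, haU, ha, ?_⟩
  have hab : LinearIndependent K ![a, b] := by
    rw [LinearIndependent.pair_symm_iff]
    exact linearIndependent_pair_iff_ne_zero_and_notMem_span.mpr ⟨hb, ha⟩
  have : FiniteDimensional K U := Module.finite_of_finrank_eq_succ hU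
  refine (eq_of_le_of_finrank_eq ?_ ?_).symm
  · simpa [span_le, Set.insert_subset_iff] using ⟨haU, hbU⟩
  · rw [hU, ← range_cons_cons_empty a b ![], finrank_span_eq_card hab]
    simp

theorem ne_zero_and_notMem_span_of_normalForm {x x' z : V}
    (h : (x' = x ∧ LinearIndependent K ![x, z]) ∨ LinearIndependent K ![x, x', z]) :
    x ≠ 0 ∧ x' ≠ 0 ∧ z ∉ span K {x, x'} := by
  rcases h with ⟨rfl, h⟩ | h
  · obtain ⟨hx, hz⟩ := linearIndependent_pair_iff_ne_zero_and_notMem_span.mp h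
    simpa [hx] using hz
  · obtain ⟨hxx', hz⟩ := linearIndependent_triple_iff.mp h
    obtain ⟨hx, hx'⟩ := linearIndependent_pair_iff_ne_zero_and_notMem_span.mp hxx'
    exact ⟨hx, fun h0 => hx' (h0 ▸ zero_mem _), hz⟩

theorem exists_smul_eq_and_normalForm {x x' z : V} (hx : x ≠ 0) (hx' : x' ≠ 0)
    (hz : z ∉ span K {x, x'}) :
    ∃ (c : K) (x'' : V), c ≠ 0 ∧ x' = c • x'' ∧
      ((x'' = x ∧ LinearIndependent K ![x, z]) ∨ LinearIndependent K ![x, x'', z]) := by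
  by_cases hx'x : x' ∈ span K {x}
  · obtain ⟨c, rfl⟩ := mem_span_singleton.mp hx'x
    refine ⟨c, x, left_ne_zero_of_smul hx', rfl, Or.inl ⟨rfl, ?_⟩⟩
    refine linearIndependent_pair_iff_ne_zero_and_notMem_span.mpr ⟨hx, fun h => hz ?_⟩
    exact span_mono (by simp) h
  · refine ⟨1, x', one_ne_zero, (one_smul K x').symm, Or.inr ?_⟩
    exact linearIndependent_triple_iff.mpr
      ⟨linearIndependent_pair_iff_ne_zero_and_notMem_span.mpr ⟨hx, hx'x⟩, hz⟩

end LinearAlgebra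

section OuterProduct

variable {K n : Type*} [Field K]

theorem vecMulVec_eq_zero_iff {m : Type*} {h : m → K} {x : n → K} :
    vecMulVec h x = 0 ↔ h = 0 ∨ x = 0 := by
  simp only [← ext_iff, vecMulVec_apply, Matrix.zero_apply, mul_eq_zero, funext_iff,
    Pi.zero_apply, forall_or_left, forall_or_right]

theorem LinearIndependent.eq_of_vecMulVec_add_vecMulVec_eq {m : Type*} {h₁ h₂ : m → K}
    (hli : LinearIndependent K ![h₁, h₂]) {u v u' v' : n → K}
    (H : vecMulVec h₁ u + vecMulVec h₂ v = vecMulVec h₁ u' + vecMulVec h₂ v') :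
    u = u' ∧ v = v' := by
  have hcol : ∀ j, u j - u' j = 0 ∧ v j - v' j = 0 := fun j =>
    LinearIndependent.pair_iff.mp hli _ _ <| funext fun i => by
      have := congr_fun₂ H i j
      simp only [Matrix.add_apply, vecMulVec_apply] at this
      simp only [Pi.add_apply, Pi.smul_apply, smul_eq_mul, Pi.zero_apply]
      linear_combination this
  simp only [sub_eq_zero] at hcol
  exact ⟨funext fun j => (hcol j).1, funext fun j => (hcol j).2⟩

theorem exists_eq_vecMulVec_add_vecMulVec {m : Type*} {h₁ h₂ : m → K}
    (hspan : span K {h₁, h₂} = ⊤) (A : Matrix m n K) :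
    ∃ x z : n → K, A = vecMulVec h₁ x + vecMulVec h₂ z := by
  have hcol (j : n) : ∃ a b : K, a • h₁ + b • h₂ = fun i => A i j :=
    mem_span_pair.mp (hspan ▸ mem_top)
  choose x z hxz using hcol
  refine ⟨x, z, ext fun i j => ?_⟩
  simpa [vecMulVec_apply, mul_comm] using (congr_fun (hxz j) i).symm

/-- In `span {h₁ ⊗ x + h₂ ⊗ z, h₂ ⊗ x'}`, a nonzero coefficient of the first generator would
force `z ∈ span {x, x'}`. -/
theorem vecMulVec_mem_span_singleton_of_mem_span_pair {h₁ h₂ h : Fin 2 → K}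
    (hli : LinearIndependent K ![h₁, h₂]) {x x' z y : n → K} (hx : x ≠ 0)
    (hz : z ∉ span K {x, x'})
    (hN : vecMulVec h y ∈ span K {vecMulVec h₁ x + vecMulVec h₂ z, vecMulVec h₂ x'}) :
    vecMulVec h y ∈ span K {vecMulVec h₂ x'} := by
  obtain ⟨c, d, hcd⟩ := mem_span_pair.mp hN
  obtain ⟨a, b, rfl⟩ := mem_span_pair.mp (hli.span_pair_eq_top (by simp) ▸ mem_top : h ∈ _)
  have hcoef : vecMulVec h₁ (c • x) + vecMulVec h₂ (c • z + d • x') =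
      vecMulVec h₁ (a • y) + vecMulVec h₂ (b • y) := by
    simp only [vecMulVec_add, vecMulVec_smul, add_vecMulVec, smul_vecMulVec] at hcd ⊢
    linear_combination (norm := module) hcd
  obtain ⟨hxy, hzy⟩ := hli.eq_of_vecMulVec_add_vecMulVec_eq hcoef
  suffices hc : c = 0 by
    rw [← hcd, hc, zero_smul, zero_add]
    exact smul_mem _ _ (mem_span_singleton_self _)
  by_contra hc
  have ha : a ≠ 0 := by
    rintro rfl
    simp [hc, hx] at hxy
  have hz' : (a * c) • z = (b * c) • x - (a * d) • x' := by
    linear_combination (norm := module) a • hzy - b • hxy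
  exact hz <| (smul_mem_iff _ (mul_ne_zero ha hc)).mp <| hz' ▸
    sub_mem (smul_mem _ _ (subset_span (by simp))) (smul_mem _ _ (subset_span (by simp)))

end OuterProduct

section DecomposableDirections

variable {U : Submodule ℂ (Matrix (Fin 2) (Fin 3) ℂ)}

theorem vecMulVec_mem_span_of_decDirections_eq_singleton {B : Matrix (Fin 2) (Fin 3) ℂ}
    (hD : decDirections U = {span ℂ {B}}) {h : Fin 2 → ℂ} {y : Fin 3 → ℂ}
    (hN : vecMulVec h y ∈ U) : vecMulVec h y ∈ span ℂ {B} := by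
  by_cases h0 : vecMulVec h y = 0
  · exact h0 ▸ zero_mem _
  obtain ⟨hh, hy⟩ : h ≠ 0 ∧ y ≠ 0 := by simpa [vecMulVec_eq_zero_iff, not_or] using h0
  have hmem : span ℂ {vecMulVec h y} ∈ decDirections U := ⟨_, hN, h0, ⟨h, y, hh, hy, rfl⟩, rfl⟩
  rw [hD, Set.mem_singleton_iff] at hmem
  exact hmem ▸ mem_span_singleton_self _

theorem exists_span_eq_of_decDirections_eq_singleton (hU : Module.finrank ℂ U = 2)
    {D : Submodule ℂ (Matrix (Fin 2) (Fin 3) ℂ)} (hD : decDirections U = {D}) :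
    ∃ (h₁ h₂ : Fin 2 → ℂ) (x x' z : Fin 3 → ℂ), LinearIndependent ℂ ![h₁, h₂] ∧
      U = span ℂ {vecMulVec h₁ x + vecMulVec h₂ z, vecMulVec h₂ x'} ∧
      x ≠ 0 ∧ x' ≠ 0 ∧ z ∉ span ℂ {x, x'} := by
  obtain ⟨B, hBU, hB0, ⟨h₂, x', hh₂, hx', rfl⟩, rfl⟩ : D ∈ decDirections U := hD ▸ rfl
  have hline {h : Fin 2 → ℂ} {y : Fin 3 → ℂ} (hN : vecMulVec h y ∈ U) :=
    vecMulVec_mem_span_of_decDirections_eq_singleton hD hN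
  obtain ⟨h₁, hli⟩ := exists_linearIndependent_pair_of_one_lt_finrank (R := ℂ) (by simp) hh₂
  rw [LinearIndependent.pair_symm_iff] at hli
  obtain ⟨A, hAU, hAB, hUA⟩ := exists_eq_span_pair_of_finrank_eq_two hU hBU hB0
  obtain ⟨x, z, rfl⟩ := exists_eq_vecMulVec_add_vecMulVec (hli.span_pair_eq_top (by simp)) A
  refine ⟨h₁, h₂, x, x', z, hli, hUA, ?_, hx', ?_⟩
  · rintro rfl
    rw [vecMulVec_eq_zero_iff.mpr (.inr rfl), zero_add] at hAU hAB
    exact hAB (hline hAU)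
  · intro hz
    obtain ⟨p, q, rfl⟩ := mem_span_pair.mp hz
    have hA : vecMulVec h₁ x + vecMulVec h₂ (p • x + q • x') =
        vecMulVec (h₁ + p • h₂) x + q • vecMulVec h₂ x' := by
      simp only [vecMulVec_add, vecMulVec_smul, add_vecMulVec, smul_vecMulVec]
      abel
    have hBline := mem_span_singleton_self (R := ℂ) (vecMulVec h₂ x')
    rw [hA] at hAU hAB
    refine hAB (add_mem (hline ?_) (smul_mem _ _ hBline))
    simpa using sub_mem hAU (smul_mem _ q hBU)

theorem decDirections_span_eq_singleton {h₁ h₂ : Fin 2 → ℂ} {x x' z : Fin 3 → ℂ}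
    (hli : LinearIndependent ℂ ![h₁, h₂]) (hx : x ≠ 0) (hx' : x' ≠ 0)
    (hz : z ∉ span ℂ {x, x'}) :
    decDirections (span ℂ {vecMulVec h₁ x + vecMulVec h₂ z, vecMulVec h₂ x'}) =
      {span ℂ {vecMulVec h₂ x'}} := by
  have hh₂ : h₂ ≠ 0 := by simpa using hli.ne_zero 1
  ext D
  rw [Set.mem_singleton_iff]
  constructor
  · rintro ⟨_, hN, hN0, ⟨h, y, -, -, rfl⟩, rfl⟩
    obtain ⟨d, hd⟩ := mem_span_singleton.mp
      (vecMulVec_mem_span_singleton_of_mem_span_pair hli hx hz hN)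
    rw [← hd] at hN0 ⊢
    exact span_singleton_smul_eq (IsUnit.mk0 d (left_ne_zero_of_smul hN0)) _
  · rintro rfl
    have hB0 : vecMulVec h₂ x' ≠ 0 := by simp [vecMulVec_eq_zero_iff, hh₂, hx']
    exact ⟨_, subset_span (by simp), hB0, ⟨h₂, x', hh₂, hx', rfl⟩, rfl⟩

end DecomposableDirections

/-- A 2-dimensional subspace `U ⊆ ℂ² ⊗ ℂ³` has exactly one decomposable direction if and only
if there are a basis `(h₁, h₂)` of `ℂ²` and vectors `x, x', z ∈ ℂ³` with
`U = span {h₁ ⊗ x + h₂ ⊗ z, h₂ ⊗ x'}`, where either (a) `x' = x` and `(x, z)` is linearly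
independent, or (b) `(x, x', z)` is a basis of `ℂ³`. -/
theorem stmt_8 (U : Submodule ℂ (Matrix (Fin 2) (Fin 3) ℂ))
    (hU : Module.finrank ℂ U = 2) :
    (∃ D : Submodule ℂ (Matrix (Fin 2) (Fin 3) ℂ), decDirections U = {D}) ↔
    (∃ (h₁ h₂ : Fin 2 → ℂ) (x x' z : Fin 3 → ℂ),
      LinearIndependent ℂ ![h₁, h₂] ∧
      U = Submodule.span ℂ {vecMulVec h₁ x + vecMulVec h₂ z, vecMulVec h₂ x'} ∧
      ((x' = x ∧ LinearIndependent ℂ ![x, z]) ∨ LinearIndependent ℂ ![x, x', z])) := by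
  constructor
  · rintro ⟨D, hD⟩
    obtain ⟨h₁, h₂, x, x', z, hli, rfl, hx, hx', hz⟩ :=
      exists_span_eq_of_decDirections_eq_singleton hU hD
    obtain ⟨c, x'', hc, rfl, hnormal⟩ := exists_smul_eq_and_normalForm hx hx' hz
    refine ⟨h₁, h₂, x, x'', z, hli, ?_, hnormal⟩
    rw [vecMulVec_smul, span_pair_smul_right _ _ hc]
  · rintro ⟨h₁, h₂, x, x', z, hli, rfl, hnormal⟩
    obtain ⟨hx, hx', hz⟩ := ne_zero_and_notMem_span_of_normalForm hnormal
    exact ⟨_, decDirections_span_eq_singleton hli hx hx' hz⟩
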